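/- Let f be a Boolean function in k variables whose ANF has r ≤ 2^k nonzero coefficients (i.e., r monomials). Then the NNF of f has at most min(2^k, 2^r − 1) nonzero coefficients. -/

import Mathlib

/-! Over `ℤ`, the `0/1` value of a sum `x₁ + ⋯ + xᵣ` in `ZMod 2` is
`∑_{∅ ≠ S} (-2)^(|S|-1) ∏_{u ∈ S} xᵤ`, because `x ↦ 1 - 2x` turns addition mod 2 into
multiplication. Applied to the `r` monomials of the ANF, and using that a product of `0/1`
monomials is the monomial whose exponent is the pointwise maximum, this writes `f` as an integer
combination of at most `2^r - 1` monomials. The NNF is unique, so its support lies among their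
exponents. -/

open Finset

def bitVal : ZMod 2 →*₀ ℤ where
  toFun x := x.val
  map_zero' := rfl
  map_one' := rfl
  map_mul' := by decide

lemma bitVal_add (x y : ZMod 2) :
    bitVal (x + y) = bitVal x + bitVal y - 2 * bitVal x * bitVal y := by
  revert x y; decide

lemma bitVal_sum {α : Type*} [DecidableEq α] (s : Finset α) (g : α → ZMod 2) :
    bitVal (∑ u ∈ s, g u) =
      ∑ t ∈ s.powerset.erase ∅, (-2 : ℤ) ^ (#t - 1) * ∏ u ∈ t, bitVal (g u) := by
  have hsign : 1 - 2 * bitVal (∑ u ∈ s, g u) = ∏ u ∈ s, (1 + -2 * bitVal (g u)) := by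
    induction s using Finset.induction with
    | empty => simp
    | insert a s ha ih => rw [sum_insert ha, prod_insert ha, ← ih, bitVal_add]; ring
  rw [prod_one_add, ← add_sum_erase _ _ (empty_mem_powerset s), prod_empty] at hsign
  refine mul_left_cancel₀ (by norm_num : (-2 : ℤ) ≠ 0) ?_
  rw [mul_sum]
  calc -2 * bitVal (∑ u ∈ s, g u) = ∑ t ∈ s.powerset.erase ∅, ∏ u ∈ t, -2 * bitVal (g u) := by
        linarith
    _ = _ := by
      refine sum_congr rfl fun t ht => ?_
      have ht : #t - 1 + 1 = #t :=
        Nat.sub_add_cancel (card_pos.2 (nonempty_iff_ne_empty.2 (ne_of_mem_erase ht)))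
      rw [prod_mul_distrib, prod_const, ← mul_assoc, ← pow_succ', ht]

lemma sum_mul_eq_sum_filter_ne_zero {α : Type*} (s : Finset α) (b g : α → ZMod 2) :
    ∑ u ∈ s, b u * g u = ∑ u ∈ s with b u ≠ 0, g u := by
  rw [sum_filter]
  refine sum_congr rfl fun u _ => ?_
  generalize b u = x, g u = y
  revert x y; decide

section Monomials

variable {ι : Type*}

def supExponent (S : Finset (ι → ZMod 2)) : ι → ZMod 2 :=
  fun i => ((S.sup fun u => (u i).val : ℕ) : ZMod 2)

lemma supExponent_le_iff (S : Finset (ι → ZMod 2)) (v : ι → ZMod 2) :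
    (∀ i, (supExponent S i).val ≤ (v i).val) ↔ ∀ u ∈ S, ∀ i, (u i).val ≤ (v i).val := by
  have hval (i : ι) : (supExponent S i).val = S.sup fun u => (u i).val :=
    ZMod.val_cast_of_lt
      (Nat.lt_succ_of_le (Finset.sup_le fun u _ => Nat.le_of_lt_succ (u i).val_lt))
  simp only [hval, Finset.sup_le_iff]
  exact ⟨fun h u hu i => h i u hu, fun h i u hu => h u hu i⟩

variable [Fintype ι]

def intMonomial (u v : ι → ZMod 2) : ℤ := ∏ i, bitVal (v i) ^ (u i).val

lemma bitVal_monomial (u v : ι → ZMod 2) :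
    bitVal (∏ i, v i ^ (u i).val) = intMonomial u v := by
  simp only [intMonomial, map_prod, map_pow]

lemma intMonomial_eq_ite (u v : ι → ZMod 2) :
    intMonomial u v = if ∀ i, (u i).val ≤ (v i).val then 1 else 0 := by
  have hfactor (x y : ZMod 2) : bitVal y ^ x.val = if x.val ≤ y.val then 1 else 0 := by
    revert x y; decide
  simp only [intMonomial, hfactor, Fintype.prod_boole]

lemma prod_intMonomial (S : Finset (ι → ZMod 2)) (v : ι → ZMod 2) :
    ∏ u ∈ S, intMonomial u v = intMonomial (supExponent S) v := by
  simp only [intMonomial_eq_ite, prod_boole, supExponent_le_iff]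

lemma weight_lt_of_le_of_ne {w u : ι → ZMod 2} (hle : ∀ i, (w i).val ≤ (u i).val)
    (hne : w ≠ u) : ∑ i, (w i).val < ∑ i, (u i).val := by
  obtain ⟨i, hi⟩ := Function.ne_iff.1 hne
  exact sum_lt_sum (fun i _ => hle i)
    ⟨i, mem_univ i, (hle i).lt_of_ne fun h => hi (ZMod.val_injective 2 h)⟩

variable [DecidableEq ι]

lemma eq_of_sum_mul_intMonomial_eq {lam μ : (ι → ZMod 2) → ℤ}
    (h : ∀ v, ∑ u, lam u * intMonomial u v = ∑ u, μ u * intMonomial u v) : lam = μ := by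
  by_contra hne
  obtain ⟨u, hu, hmin⟩ := exists_min_image (univ.filter fun u => lam u ≠ μ u)
    (fun u => ∑ i, (u i).val) (by simpa [Finset.Nonempty, funext_iff] using hne)
  rw [mem_filter] at hu
  -- evaluating at a point of minimal weight where `lam ≠ μ` isolates the coefficient there
  have hdiff : ∑ w, (lam w - μ w) * intMonomial w u = lam u - μ u := by
    refine (sum_eq_single u (fun w _ hwu => ?_) (by simp)).trans (by simp [intMonomial_eq_ite])
    rw [intMonomial_eq_ite]
    split_ifs with hle
    · by_contra hw
      have := hmin w (by simpa [sub_eq_zero] using left_ne_zero_of_mul hw)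
      exact absurd this (not_le.2 (weight_lt_of_le_of_ne hle hwu))
    · rw [mul_zero]
  simp only [sub_mul, sum_sub_distrib, h u, sub_self] at hdiff
  exact hu.2 (sub_eq_zero.1 hdiff.symm)

lemma support_subset_image_of_sum_eq {α : Type*} (P : Finset α) (j : α → ι → ZMod 2)
    (c : α → ℤ) {lam : (ι → ZMod 2) → ℤ}
    (h : ∀ v, ∑ u, lam u * intMonomial u v = ∑ a ∈ P, c a * intMonomial (j a) v) :
    univ.filter (fun u => lam u ≠ 0) ⊆ P.image j := by
  set μ : (ι → ZMod 2) → ℤ := fun w => ∑ a ∈ P with j a = w, c a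
  have hμ : lam = μ := eq_of_sum_mul_intMonomial_eq fun v => by
    rw [h v, ← sum_fiberwise P j]
    refine sum_congr rfl fun w _ => ?_
    rw [sum_mul]
    exact sum_congr rfl fun a ha => by rw [(mem_filter.1 ha).2]
  intro w hw
  rw [mem_filter, hμ] at hw
  obtain ⟨a, ha, -⟩ := exists_ne_zero_of_sum_ne_zero hw.2
  rw [mem_filter] at ha
  exact mem_image.2 ⟨a, ha.1, ha.2⟩

end Monomials

theorem nnf_support_bound_general (k : ℕ) (f : (Fin k → ZMod 2) → ZMod 2)
    (b : (Fin k → ZMod 2) → ZMod 2) (lam : (Fin k → ZMod 2) → ℤ) (r : ℕ)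
    (hANF : ∀ v : Fin k → ZMod 2,
      f v = ∑ u : Fin k → ZMod 2, b u * ∏ i, (v i) ^ (u i).val)
    (hr : (univ.filter fun u => b u ≠ 0).card = r)
    (hNNF : ∀ v : Fin k → ZMod 2,
      ((f v).val : ℤ) = ∑ u : Fin k → ZMod 2, lam u * ∏ i, ((v i).val : ℤ) ^ (u i).val) :
    (univ.filter fun u => lam u ≠ 0).card ≤ min (2 ^ k) (2 ^ r - 1) := by
  have hexpand (v : Fin k → ZMod 2) : ∑ u, lam u * intMonomial u v =
      ∑ S ∈ (univ.filter fun u => b u ≠ 0).powerset.erase ∅,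
        (-2 : ℤ) ^ (#S - 1) * intMonomial (supExponent S) v := by
    calc ∑ u, lam u * intMonomial u v = bitVal (f v) := (hNNF v).symm
      _ = _ := by
        simp only [hANF, sum_mul_eq_sum_filter_ne_zero, bitVal_sum, bitVal_monomial,
          prod_intMonomial]
  refine le_min ((card_le_univ _).trans_eq (by simp)) ?_
  calc #{u | lam u ≠ 0}
      ≤ #((univ.filter fun u => b u ≠ 0).powerset.erase ∅) :=
        (card_le_card (support_subset_image_of_sum_eq _ _ _ hexpand)).trans card_image_le
    _ = 2 ^ r - 1 := by rw [card_erase_of_mem (empty_mem_powerset _), card_powerset, hr]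

/-- If the ANF of a Boolean function `f` in `k` variables has `r ≤ 2^k` nonzero
coefficients, then the NNF of `f` has at most `min (2^k) (2^r - 1)` nonzero
coefficients. -/
theorem nnf_support_bound (k : ℕ) (f : (Fin k → ZMod 2) → ZMod 2)
    (b : (Fin k → ZMod 2) → ZMod 2) (lam : (Fin k → ZMod 2) → ℤ) (r : ℕ)
    (hANF : ∀ v : Fin k → ZMod 2,
      f v = ∑ u : Fin k → ZMod 2, b u * ∏ i, (v i) ^ (u i).val)
    (hr : (univ.filter fun u => b u ≠ 0).card = r)
    (hrle : r ≤ 2 ^ k)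
    (hNNF : ∀ v : Fin k → ZMod 2,
      ((f v).val : ℤ) = ∑ u : Fin k → ZMod 2, lam u * ∏ i, ((v i).val : ℤ) ^ (u i).val) :
    (univ.filter fun u => lam u ≠ 0).card ≤ min (2 ^ k) (2 ^ r - 1) :=
  nnf_support_bound_general k f b lam r hANF hr hNNF
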